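/- Define F(n) = sum over k from 1 to floor(log2 n) of 2^k * Zigzag(n/2^k) for positive natural n. Then for every positive natural number n, 0 <= F(n) <= (n-1)/2. -/

import Mathlib

/-!
Write `d_k(n)` for the distance from `n` to the nearest multiple of `2 ^ k`, so that the sum is
`S(n) = ∑_{k=1}^{log₂ n} d_k(n)`. Doubling doubles every `d_k`, so `S(2m) = 2 S(m)`; appending a
binary digit `1` turns `d_{k+1}(2m+1)` into `2 d_k(m) ± 1`, with `+` exactly when bit `k - 1` of `m`
is `0`, so `S(2m+1) = 2 S(m) + c(m) + 1`, where `c(m)` counts the `0` bits of `m` below its leading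
bit minus the `1` bits. Both steps preserve the invariant `2 S(n) + max 1 (2 c(n)) ≤ n`, which
holds for `n = 1`; this gives `S(n) ≤ (n - 1) / 2`.
-/

def Zigzag (x : ℚ) : ℚ := min (x - ⌊x⌋) (⌈x⌉ - x)

open Finset

theorem zigzag_eq_min_fract (x : ℚ) : Zigzag x = min (Int.fract x) (1 - Int.fract x) := by
  unfold Zigzag
  rw [Int.self_sub_floor]
  rcases Int.fract_eq_zero_or_add_one_sub_ceil x with h | h
  · rw [h, min_eq_left (sub_nonneg.2 (Int.le_ceil x))]
    simp
  · congr 1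
    linarith

def distToMultiple (d n : ℕ) : ℕ := min (n % d) (d - n % d)

theorem cast_distToMultiple {d : ℕ} (hd : 0 < d) (n : ℕ) :
    (distToMultiple d n : ℚ) = d * Zigzag (n / d) := by
  rw [zigzag_eq_min_fract, Int.fract_div_natCast_eq_div_natCast_mod,
    mul_min_of_nonneg _ _ (Nat.cast_nonneg d), distToMultiple, Nat.cast_min,
    Nat.cast_sub (Nat.mod_lt n hd).le]
  congr 1 <;> field_simp

theorem distToMultiple_two_mul (d n : ℕ) :
    distToMultiple (2 * d) (2 * n) = 2 * distToMultiple d n := by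
  have hmod : 2 * n % (2 * d) = 2 * (n % d) := Nat.mul_mod_mul_left 2 n d
  simp only [distToMultiple, hmod]
  omega

theorem distToMultiple_two_mul_add_one {d : ℕ} (hd : 0 < d) (n : ℕ) :
    (distToMultiple (2 * d) (2 * n + 1) : ℤ) =
      2 * distToMultiple d n + if 2 * (n % d) < d then 1 else -1 := by
  have hmod : (2 * n + 1) % (2 * d) = 2 * (n % d) + 1 := by
    rw [Nat.mod_mul, show (2 * n + 1) / 2 = n by omega]
    omega
  have hlt := Nat.mod_lt n hd
  simp only [distToMultiple, hmod]
  split_ifs <;> omega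

theorem testBit_iff_two_pow_le_mod (m i : ℕ) : m.testBit i ↔ 2 ^ i ≤ m % 2 ^ (i + 1) := by
  have hlt : m % 2 ^ (i + 1) < 2 ^ (i + 1) := Nat.mod_lt _ (Nat.two_pow_pos _)
  rw [← show (m % 2 ^ (i + 1)).testBit i = m.testBit i by simp]
  constructor
  · exact Nat.ge_two_pow_of_testBit
  · exact fun h => Nat.testBit_of_two_pow_le_and_two_pow_add_one_gt h hlt

theorem distToMultiple_two_pow_add_two (m i : ℕ) :
    (distToMultiple (2 ^ (i + 2)) (2 * m + 1) : ℤ) =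
      2 * distToMultiple (2 ^ (i + 1)) m + if m.testBit i then -1 else 1 := by
  have hbit := testBit_iff_two_pow_le_mod m i
  rw [pow_succ' 2 (i + 1), distToMultiple_two_mul_add_one (Nat.two_pow_pos _)]
  rw [pow_succ] at hbit ⊢
  simp only [hbit]
  split_ifs <;> omega

def zigzagSum (n : ℕ) : ℕ := ∑ i ∈ range (Nat.log 2 n), distToMultiple (2 ^ (i + 1)) n

def bitBalance (n : ℕ) : ℤ := ∑ i ∈ range (Nat.log 2 n), if n.testBit i then -1 else 1

section Recursion

variable {m : ℕ}

theorem log_two_two_mul (hm : 0 < m) : Nat.log 2 (2 * m) = Nat.log 2 m + 1 := by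
  rw [Nat.log_of_one_lt_of_le one_lt_two (by omega), Nat.mul_div_cancel_left m two_pos]

theorem log_two_two_mul_add_one (hm : 0 < m) : Nat.log 2 (2 * m + 1) = Nat.log 2 m + 1 := by
  rw [Nat.log_of_one_lt_of_le one_lt_two (by omega), show (2 * m + 1) / 2 = m by omega]

theorem zigzagSum_two_mul (hm : 0 < m) : zigzagSum (2 * m) = 2 * zigzagSum m := by
  rw [zigzagSum, zigzagSum, log_two_two_mul hm, sum_range_succ', mul_sum]
  simp_rw [pow_succ' 2 (_ + 1), distToMultiple_two_mul]
  simp [distToMultiple]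

theorem zigzagSum_two_mul_add_one (hm : 0 < m) :
    (zigzagSum (2 * m + 1) : ℤ) = 2 * zigzagSum m + bitBalance m + 1 := by
  rw [zigzagSum, zigzagSum, bitBalance, log_two_two_mul_add_one hm, sum_range_succ']
  push_cast
  simp only [distToMultiple_two_pow_add_two, sum_add_distrib, mul_sum]
  simp [distToMultiple]

theorem bitBalance_two_mul (hm : 0 < m) : bitBalance (2 * m) = bitBalance m + 1 := by
  rw [bitBalance, bitBalance, log_two_two_mul hm, sum_range_succ']
  simp [Nat.testBit_add_one]

theorem bitBalance_two_mul_add_one (hm : 0 < m) : bitBalance (2 * m + 1) = bitBalance m - 1 := by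
  rw [bitBalance, bitBalance, log_two_two_mul_add_one hm, sum_range_succ']
  simp [Nat.testBit_add_one, show (2 * m + 1) / 2 = m by omega]
  ring

end Recursion

theorem two_mul_zigzagSum_add_le {n : ℕ} (hn : 0 < n) :
    2 * (zigzagSum n : ℤ) + max 1 (2 * bitBalance n) ≤ n := by
  induction n using Nat.strong_induction_on with
  | _ n ih =>
    obtain ⟨m, rfl | rfl⟩ := Nat.even_or_odd' n
    · have hm : 0 < m := by omega
      have := ih m (by omega) hm
      rw [zigzagSum_two_mul hm, bitBalance_two_mul hm]
      push_cast
      omega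
    · rcases Nat.eq_zero_or_pos m with rfl | hm
      · simp [zigzagSum, bitBalance]
      · have := ih m (by omega) hm
        rw [zigzagSum_two_mul_add_one hm, bitBalance_two_mul_add_one hm]
        push_cast
        omega

theorem sum_two_pow_mul_zigzag (n : ℕ) :
    ∑ k ∈ Icc 1 (Nat.log 2 n), (2 : ℚ) ^ k * Zigzag ((n : ℚ) / 2 ^ k) = zigzagSum n := by
  rw [zigzagSum, Nat.cast_sum, ← Ico_add_one_right_eq_Icc, sum_Ico_eq_sum_range]
  refine sum_congr (by simp) fun i _ => ?_
  rw [cast_distToMultiple (Nat.two_pow_pos _), add_comm]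
  push_cast
  rfl

theorem F_bounds (n : ℕ) (hn : 0 < n) :
    0 ≤ ∑ k ∈ Finset.Icc 1 (Nat.log 2 n), (2 : ℚ) ^ k * Zigzag ((n : ℚ) / 2 ^ k) ∧
    ∑ k ∈ Finset.Icc 1 (Nat.log 2 n), (2 : ℚ) ^ k * Zigzag ((n : ℚ) / 2 ^ k)
      ≤ ((n : ℚ) - 1) / 2 := by
  rw [sum_two_pow_mul_zigzag]
  refine ⟨Nat.cast_nonneg _, ?_⟩
  have h : 2 * (zigzagSum n : ℤ) + 1 ≤ n := by
    have := two_mul_zigzagSum_add_le hn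
    omega
  have hq : 2 * (zigzagSum n : ℚ) + 1 ≤ n := by exact_mod_cast h
  linarith
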